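/- arXiv:2511.02670 — 4 statements merged into one kernel-verified Lean document; each statement's English description precedes it below -/
import Mathlib

section
/- Let F be a field, let s ≤ n and t ≥ 1 be natural numbers, and let A_1, ..., A_D be n×n matrices over F all lying in the linear span of n×n matrices E_1, ..., E_r, each of rank at most one, where r < n + t − s. Then the family A_1, ..., A_D is not (s,t)-dimension-spreading: there exists a subspace U ⊆ F^n with dim(U) ≥ s and dim(Σ_{i=1}^D A_i(U)) < t. -/
/-!
Put `m = min (t - 1) r` and split the rank-one generators into `m` of them, whose ranges span
a space `V` of dimension at most `t - 1`, and the remaining `r - m ≤ n - s`, whose kernels meet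
in a subspace `U` of codimension at most `n - s`. Every generator maps `U` into `V`, and hence so
does every matrix in their span.
-/

open Module Submodule
open scoped Finset

section

variable {K V W ι : Type*} [Field K] [AddCommGroup V] [Module K V] [AddCommGroup W] [Module K W]

theorem Submodule.finrank_biSup_le_sum [FiniteDimensional K V] (S : Finset ι)
    (p : ι → Submodule K V) : finrank K ↥(⨆ i ∈ S, p i) ≤ ∑ i ∈ S, finrank K (p i) := by
  classical
  induction S using Finset.induction with
  | empty => simp
  | insert a S ha ih =>
    rw [Finset.iSup_insert, Finset.sum_insert ha]
    exact (finrank_add_le_finrank_add_finrank _ _).trans (Nat.add_le_add_left ih _)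

theorem LinearMap.finrank_le_finrank_biInf_ker_add_sum [FiniteDimensional K V] (S : Finset ι)
    (f : ι → V →ₗ[K] W) :
    finrank K V ≤ finrank K ↥(⨅ i ∈ S, ker (f i)) + ∑ i ∈ S, finrank K (range (f i)) := by
  classical
  induction S using Finset.induction with
  | empty =>
    rw [show ⨅ i ∈ (∅ : Finset ι), ker (f i) = ⊤ by simp, finrank_top]
    simp
  | insert a S ha ih =>
    rw [Finset.iInf_insert, Finset.sum_insert ha]
    have h_inter := finrank_sup_add_finrank_inf_eq (ker (f a)) (⨅ i ∈ S, ker (f i))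
    have h_sup := finrank_le (ker (f a) ⊔ ⨅ i ∈ S, ker (f i))
    have h_rank := (f a).finrank_range_add_finrank_ker
    omega

theorem LinearMap.map_biInf_ker_le_biSup_range_of_mem_span [Fintype ι] [DecidableEq ι]
    {g : ι → V →ₗ[K] W} (T : Finset ι) {f : V →ₗ[K] W} (hf : f ∈ span K (Set.range g)) :
    (⨅ i ∈ Tᶜ, ker (g i)).map f ≤ ⨆ i ∈ T, range (g i) := by
  rw [map_le_iff_le_comap]
  intro x hx
  rw [mem_comap]
  induction hf using span_induction with
  | mem _ hg =>
    obtain ⟨i, rfl⟩ := hg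
    by_cases hi : i ∈ T
    · exact le_biSup (fun i => range (g i)) hi (mem_range_self _ x)
    · have hx0 : g i x = 0 := biInf_le (fun i => ker (g i)) (Finset.mem_compl.mpr hi) hx
      simp [hx0]
  | zero => simp
  | add _ _ _ _ h₁ h₂ => simpa only [add_apply] using add_mem h₁ h₂
  | smul c _ _ h => simpa only [smul_apply] using smul_mem _ c h

end

theorem Matrix.mulVecLin_mem_span_range {K m n ι : Type*} [Field K] [Fintype n] [DecidableEq n]
    {E : ι → Matrix m n K} {M : Matrix m n K} (hM : M ∈ span K (Set.range E)) :
    M.mulVecLin ∈ span K (Set.range fun i => (E i).mulVecLin) := by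
  have := apply_mem_span_image_of_mem_span Matrix.toLin'.toLinearMap hM
  simpa only [← Set.range_comp, Function.comp_def, LinearEquiv.coe_coe,
    Matrix.toLin'_apply'] using this

/-- If `A₁, …, A_D` all lie in the span of `r` rank ≤ 1 matrices with `r < n + t - s`
(where `s ≤ n` and `t ≥ 1`), then the family is not `(s,t)`-dimension-spreading: some
subspace of dimension at least `s` has image sum of dimension less than `t`. -/
theorem not_dimSpreading_of_span_rank_one {F : Type*} [Field F] {D n r s t : ℕ}
    (hs : s ≤ n) (ht : 1 ≤ t)
    (E : Fin r → Matrix (Fin n) (Fin n) F)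
    (hE : ∀ ℓ, (E ℓ).rank ≤ 1)
    (A : Fin D → Matrix (Fin n) (Fin n) F)
    (hA : ∀ i, A i ∈ Submodule.span F (Set.range E))
    (hr : r + s < n + t) :
    ∃ U : Submodule F (Fin n → F),
      s ≤ Module.finrank F U ∧
      Module.finrank F ↥(⨆ i, U.map (A i).mulVecLin) < t := by
  classical
  obtain ⟨T, -, hT⟩ := Finset.exists_subset_card_eq
    (show min (t - 1) r ≤ #(Finset.univ : Finset (Fin r)) by simp)
  have hTc : #Tᶜ = r - #T := by simp [Finset.card_compl]
  let g := fun ℓ => (E ℓ).mulVecLin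
  have sum_le_card (S : Finset (Fin r)) : ∑ ℓ ∈ S, finrank F (LinearMap.range (g ℓ)) ≤ #S := by
    have := Finset.sum_le_card_nsmul S (fun ℓ => finrank F (LinearMap.range (g ℓ))) 1
      fun ℓ _ => hE ℓ
    rwa [smul_eq_mul, mul_one] at this
  refine ⟨⨅ ℓ ∈ Tᶜ, LinearMap.ker (g ℓ), ?_, ?_⟩
  · have hU := LinearMap.finrank_le_finrank_biInf_ker_add_sum Tᶜ g
    have hsum := sum_le_card Tᶜ
    rw [Module.finrank_fin_fun] at hU
    omega
  · calc finrank F ↥(⨆ i, (⨅ ℓ ∈ Tᶜ, LinearMap.ker (g ℓ)).map (A i).mulVecLin)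
        ≤ finrank F ↥(⨆ ℓ ∈ T, LinearMap.range (g ℓ)) := finrank_mono <|
          iSup_le fun i => LinearMap.map_biInf_ker_le_biSup_range_of_mem_span T
            (Matrix.mulVecLin_mem_span_range (hA i))
      _ ≤ ∑ ℓ ∈ T, finrank F (LinearMap.range (g ℓ)) := finrank_biSup_le_sum T _
      _ ≤ #T := sum_le_card T
      _ < t := by omega
end

section
/- Let A = {A_1, ..., A_D} be a set of n×n matrices over a field F that is a τ-dimension expander, is closed under taking transpose (for every i there is j with A_j = A_iᵀ), and contains the identity matrix. Let U ⊆ F^n be a subspace of dimension αn with 1/2 < α < 1. Then dim(Σ_{i=1}^D A_i(U)) ≥ (1 + τ(1−α)/2)·dim(U). -/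
open Matrix Module

section aux
variable {F : Type*} [Field F] {n : ℕ}

lemma toDual_eq_dot (x y : Fin n → F) :
    (Pi.basisFun F (Fin n)).toDual x y = x ⬝ᵥ y := by
  conv_lhs => rw [← (Pi.basisFun F (Fin n)).sum_repr y]
  rw [map_sum]
  simp only [_root_.map_smul, smul_eq_mul, Basis.toDual_eq_repr, Pi.basisFun_repr]
  rw [dotProduct]
  exact Finset.sum_congr rfl fun i _ => mul_comm _ _

/-- orthogonal complement wrt dot product -/
noncomputable def dperp (S : Submodule F (Fin n → F)) : Submodule F (Fin n → F) :=
  S.dualAnnihilator.comap ((Pi.basisFun F (Fin n)).toDualEquiv : (Fin n → F) →ₗ[F] _)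

lemma mem_dperp {S : Submodule F (Fin n → F)} {x : Fin n → F} :
    x ∈ dperp S ↔ ∀ s ∈ S, x ⬝ᵥ s = 0 := by
  simp only [dperp, Submodule.mem_comap, LinearEquiv.coe_coe, Basis.toDualEquiv_apply,
    Submodule.mem_dualAnnihilator]
  constructor
  · intro h s hs; rw [← toDual_eq_dot]; exact h s hs
  · intro h s hs; rw [toDual_eq_dot]; exact h s hs

lemma finrank_dperp (S : Submodule F (Fin n → F)) :
    finrank F (dperp S) + finrank F S = n := by
  have h1 : finrank F (dperp S) = finrank F S.dualAnnihilator := by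
    rw [dperp, Submodule.comap_equiv_eq_map_symm]
    exact LinearEquiv.finrank_map_eq _ _
  have h2 : finrank F S.dualAnnihilator = finrank F ((Fin n → F) ⧸ S) :=
    (LinearEquiv.finrank_eq (Subspace.quotEquivAnnihilator S)).symm
  rw [h1, h2, Submodule.finrank_quotient_add_finrank, Module.finrank_fin_fun]

end aux


/-- The family `A₁, …, A_D` is a `τ`-dimension expander: every subspace of dimension at most
`n/2` has image sum of dimension at least `(1+τ)` times its dimension. -/
def DimExpander {F : Type*} [Field F] {D n : ℕ}
    (A : Fin D → Matrix (Fin n) (Fin n) F) (τ : ℝ) : Prop :=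
  ∀ U : Submodule F (Fin n → F), 2 * Module.finrank F U ≤ n →
    (1 + τ) * (Module.finrank F U : ℝ) ≤
      (Module.finrank F ↥(⨆ i, U.map (A i).mulVecLin) : ℝ)

set_option maxHeartbeats 1000000 in
/-- If the family is a `τ`-dimension expander, closed under transpose, and contains the
identity, then for any subspace `U` of dimension `αn` with `1/2 < α < 1`,
`dim(Σᵢ Aᵢ(U)) ≥ (1 + τ(1-α)/2)·dim(U)`. -/
theorem expand_large_subspace {F : Type*} [Field F] {D n : ℕ} (τ : ℝ)
    (A : Fin D → Matrix (Fin n) (Fin n) F)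
    (hexp : DimExpander A τ)
    (htrans : ∀ i, ∃ j, A j = (A i)ᵀ)
    (hid : ∃ i, A i = 1)
    (U : Submodule F (Fin n → F))
    (h1 : (n : ℝ) / 2 < (Module.finrank F U : ℝ))
    (h2 : Module.finrank F U < n) :
    (1 + τ * (1 - (Module.finrank F U : ℝ) / n) / 2) * (Module.finrank F U : ℝ) ≤
      (Module.finrank F ↥(⨆ i, U.map (A i).mulVecLin) : ℝ) := by
  set d := Module.finrank F U with hd
  set W := ⨆ i, U.map (A i).mulVecLin with hW
  set w := Module.finrank F W with hw
  -- basic facts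
  have h1n : n < 2 * d := by exact_mod_cast (by linarith : (n : ℝ) < 2 * d)
  have hn3 : 3 ≤ n := by omega
  have hUW : U ≤ W := by
    obtain ⟨i, hi⟩ := hid
    have : U.map (A i).mulVecLin = U := by rw [hi, Matrix.mulVecLin_one, Submodule.map_id]
    rw [hW]
    calc U = U.map (A i).mulVecLin := this.symm
    _ ≤ _ := le_iSup (fun i => U.map (A i).mulVecLin) i
  have hdw : d ≤ w := Submodule.finrank_mono hUW
  have hwn : w ≤ n := by
    have := Submodule.finrank_le W
    rwa [Module.finrank_fin_fun] at this
  -- τ ≤ 0 case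
  rcases le_or_gt τ 0 with hτ | hτ
  · have hd0 : (0:ℝ) ≤ d := Nat.cast_nonneg d
    have hdn : (d:ℝ) ≤ n := by exact_mod_cast h2.le
    have hn0 : (0:ℝ) < n := by positivity
    have h1d : (1:ℝ) - d / n ≥ 0 := by
      rw [ge_iff_le, sub_nonneg, div_le_one hn0]; exact hdn
    have : (d:ℝ) ≤ w := by exact_mod_cast hdw
    nlinarith [mul_nonneg h1d hd0]
  -- τ > 0
  -- bound on τ : (1+τ) * d ≤ 2 * n, via a subspace of dim n/2
  have hτbound : (1 + τ) * (d:ℝ) ≤ 2 * n := by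
    set k := n / 2 with hk
    have hkn : k ≤ n := Nat.div_le_self n 2
    set v : Fin k → (Fin n → F) := fun i => Pi.basisFun F (Fin n) (Fin.castLE hkn i) with hv
    have hvli : LinearIndependent F v :=
      (Pi.basisFun F (Fin n)).linearIndependent.comp _ (Fin.castLE_injective hkn)
    have hrank : finrank F (Submodule.span F (Set.range v)) = k := (finrank_span_eq_card hvli).trans (Fintype.card_fin k)
    have hk2 : 2 * finrank F (Submodule.span F (Set.range v)) ≤ n := by rw [hrank]; omega
    have := hexp (Submodule.span F (Set.range v)) hk2
    rw [hrank] at this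
    have hle : (finrank F ↥(⨆ i, (Submodule.span F (Set.range v)).map (A i).mulVecLin) : ℝ)
        ≤ n := by
      have := Submodule.finrank_le (⨆ i, (Submodule.span F (Set.range v)).map (A i).mulVecLin)
      rw [Module.finrank_fin_fun] at this
      exact_mod_cast this
    have hkr : ((n:ℝ) - 1) / 2 ≤ (k:ℝ) := by
      have : n ≤ 2 * k + 1 := by omega
      have : (n:ℝ) ≤ 2 * k + 1 := by exact_mod_cast this
      linarith
    have hdn1 : (d:ℝ) ≤ (n:ℝ) - 1 := by
      have : d ≤ n - 1 := by omega
      have : (d:ℝ) ≤ ((n - 1 : ℕ):ℝ) := by exact_mod_cast this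
      have hn1 : ((n - 1 : ℕ):ℝ) = (n:ℝ) - 1 := by
        have : 1 ≤ n := by omega
        push_cast [this]; ring
      linarith
    -- (1+τ) * (n-1) ≤ (1+τ) * 2k ≤ 2n
    have h1τ : (0:ℝ) < 1 + τ := by linarith
    nlinarith [this, hle, hkr, hdn1, h1τ]
  -- the dual argument
  set V := dperp W with hV
  have hVrank : finrank F V + w = n := finrank_dperp W
  have hVsmall : 2 * finrank F V ≤ n := by omega
  have hexpV := hexp V hVsmall
  -- image of V is in dperp U
  have himg : (⨆ i, V.map (A i).mulVecLin) ≤ dperp U := by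
    apply iSup_le
    intro j y hy
    obtain ⟨x, hxV, rfl⟩ := hy
    rw [mem_dperp]
    intro u hu
    obtain ⟨k, hk⟩ := htrans j
    have hmem : A k *ᵥ u ∈ W := by
      have hmm : A k *ᵥ u ∈ U.map (A k).mulVecLin := ⟨u, hu, rfl⟩
      rw [hW]
      exact le_iSup (fun i => U.map (A i).mulVecLin) k hmm
    have := (mem_dperp.mp hxV) _ hmem
    calc (A j).mulVecLin x ⬝ᵥ u = (A j *ᵥ x) ⬝ᵥ u := rfl
      _ = u ⬝ᵥ (A j *ᵥ x) := dotProduct_comm _ _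
      _ = (u ᵥ* A j) ⬝ᵥ x := Matrix.dotProduct_mulVec _ _ _
      _ = ((A j)ᵀ *ᵥ u) ⬝ᵥ x := by rw [Matrix.mulVec_transpose]
      _ = x ⬝ᵥ ((A j)ᵀ *ᵥ u) := dotProduct_comm _ _
      _ = x ⬝ᵥ (A k *ᵥ u) := by rw [hk]
      _ = 0 := this
  have hUperp : finrank F (dperp U) + d = n := finrank_dperp U
  have hfr : finrank F ↥(⨆ i, V.map (A i).mulVecLin) ≤ finrank F (dperp U) :=
    Submodule.finrank_mono himg
  -- key inequality
  have hkey : (1 + τ) * ((n:ℝ) - w) ≤ (n:ℝ) - d := by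
    have hVr : (finrank F V : ℝ) = (n:ℝ) - w := by
      have : (finrank F V : ℝ) + w = n := by exact_mod_cast hVrank
      linarith
    have hUr : (finrank F (dperp U) : ℝ) = (n:ℝ) - d := by
      have : (finrank F (dperp U) : ℝ) + d = n := by exact_mod_cast hUperp
      linarith
    have hfr' : (finrank F ↥(⨆ i, V.map (A i).mulVecLin) : ℝ) ≤ (n:ℝ) - d := by
      rw [← hUr]; exact_mod_cast hfr
    calc (1 + τ) * ((n:ℝ) - w) = (1 + τ) * (finrank F V : ℝ) := by rw [hVr]
      _ ≤ _ := hexpV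
      _ ≤ (n:ℝ) - d := hfr'
  -- final arithmetic
  have hn0 : (0:ℝ) < n := by positivity
  have hdr : (n:ℝ) / 2 < d := h1
  have hdn : (d:ℝ) < n := by exact_mod_cast h2
  have hdwr : (d:ℝ) ≤ w := by exact_mod_cast hdw
  have hwnr : (w:ℝ) ≤ n := by exact_mod_cast hwn
  have expand : (1 + τ * (1 - (d:ℝ)/n)/2) * d = (d:ℝ) + τ * d * ((n:ℝ) - d) / (2 * n) := by
    field_simp
  rw [expand]
  have key2 : τ * d * ((n:ℝ) - d) ≤ ((w:ℝ) - d) * (2 * n) := by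
    nlinarith [mul_le_mul_of_nonneg_right hkey hn0.le,
      mul_le_mul_of_nonneg_left hτbound (mul_nonneg hτ.le (by linarith : (0:ℝ) ≤ (n:ℝ) - d)),
      hkey, hτbound, hτ, hdwr, hwnr, hdn]
  have hdiv : τ * (d:ℝ) * ((n:ℝ) - d) / (2 * n) ≤ (w:ℝ) - d :=
    (div_le_iff₀ (by positivity)).mpr key2
  linarith
end

section
/- Let A = {A_1, ..., A_D} be a set of n×n matrices over a field F that is a τ-dimension expander (τ > 0), is closed under taking transpose (for every i there is j with A_j = A_iᵀ), and contains the identity matrix. Let 0 < ε < 1 and let t be an integer with t > 3·log₂(1/ε)/τ. Then the family A^(t) consisting of all products of t matrices from A is (εn, (1−ε)n)-dimension-spreading: for every subspace U ⊆ F^n with dim(U) ≥ εn, we have dim(Σ_{B ∈ A^(t)} B(U)) ≥ (1−ε)n. -/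
open Matrix

/-- The product of the `t` matrices `A (w 0), A (w 1), …, A (w (t-1))` given by the
word `w`. -/
def wordProd {F : Type*} [Field F] {D n : ℕ}
    (A : Fin D → Matrix (Fin n) (Fin n) F) {t : ℕ} (w : Fin t → Fin D) :
    Matrix (Fin n) (Fin n) F :=
  (List.ofFn fun j => A (w j)).prod

/-! Write `W s` for the span of the images of `U` under words of length `s`, so that
`W (s + 1) = ∑ᵢ Aᵢ (W s)` and, as `A` contains the identity, `W` is increasing. While
`dim W s ≤ n / 2` expansion multiplies it by `1 + τ`, so `W (t / 2)` has dimension at least `n / 2`.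
Since `A` is closed under transposition, `∑ᵢ Aᵢ (W (s + 1))ᗮ ≤ (W s)ᗮ` for the dot product, so the
complements `(W (t - k))ᗮ` form an expanding chain as well. If `dim W t < (1 - ε) n`, it starts
above `ε n` and `(W (t - t / 2))ᗮ` has dimension more than `n / 2`; but it is orthogonal to
`W (t / 2) ≤ W (t - t / 2)`. The bound on `t` suffices because `τ ≤ 2` once `n ≥ 2`, and then
`1 + τ ≥ 3 ^ (τ / 2) ≥ 2 ^ (3 τ / 4)`. -/

open Module

section

variable {F : Type*} [Field F] {D n : ℕ} (A : Fin D → Matrix (Fin n) (Fin n) F)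

def imageSum (V : Submodule F (Fin n → F)) : Submodule F (Fin n → F) :=
  ⨆ i, V.map (A i).mulVecLin

def wordSpan (U : Submodule F (Fin n → F)) (s : ℕ) : Submodule F (Fin n → F) :=
  ⨆ w : Fin s → Fin D, U.map (wordProd A w).mulVecLin

variable {A}

lemma le_imageSum (hid : ∃ i, A i = 1) (V : Submodule F (Fin n → F)) : V ≤ imageSum A V := by
  obtain ⟨i, hi⟩ := hid
  calc V = V.map (A i).mulVecLin := by rw [hi, mulVecLin_one, Submodule.map_id]
    _ ≤ imageSum A V := le_iSup (fun j => V.map (A j).mulVecLin) i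

lemma wordProd_cons {t : ℕ} (i : Fin D) (w : Fin t → Fin D) :
    wordProd A (Fin.cons i w) = A i * wordProd A w := by
  simp [wordProd, List.ofFn_succ]

lemma wordSpan_zero (U : Submodule F (Fin n → F)) : wordSpan A U 0 = U := by
  simp [wordSpan, wordProd]

lemma wordSpan_succ (U : Submodule F (Fin n → F)) (s : ℕ) :
    wordSpan A U (s + 1) = imageSum A (wordSpan A U s) := by
  simp only [wordSpan, imageSum, Submodule.map_iSup, ← Submodule.map_comp,
    ← mulVecLin_mul, ← wordProd_cons]
  rw [← (Fin.consEquiv fun _ => Fin D).iSup_comp, iSup_prod]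
  rfl

lemma finrank_orthogonal_dotProduct_add (V : Submodule F (Fin n → F)) :
    finrank F ((toBilin' (1 : Matrix (Fin n) (Fin n) F)).orthogonal V) + finrank F V = n := by
  have hB : (toBilin' (1 : Matrix (Fin n) (Fin n) F)).Nondegenerate :=
    (nondegenerate_of_det_ne_zero (by simp)).toBilin'
  have hV : finrank F V ≤ n := by simpa using V.finrank_le
  rw [LinearMap.BilinForm.finrank_orthogonal hB, finrank_fin_fun]
  omega

lemma imageSum_orthogonal_imageSum_le (htrans : ∀ i, ∃ j, A j = (A i)ᵀ)
    (V : Submodule F (Fin n → F)) :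
    imageSum A ((toBilin' 1).orthogonal (imageSum A V)) ≤ (toBilin' 1).orthogonal V := by
  refine iSup_le fun i => Submodule.map_le_iff_le_comap.2 fun y hy => ?_
  simp only [Submodule.mem_comap, LinearMap.BilinForm.mem_orthogonal_iff,
    toBilin'_apply', one_mulVec] at hy ⊢
  intro x hx
  obtain ⟨j, hj⟩ := htrans i
  have hjx : A j *ᵥ x ∈ imageSum A V :=
    le_iSup (fun k => V.map (A k).mulVecLin) j (Submodule.mem_map_of_mem hx)
  rw [mulVecLin_apply, dotProduct_mulVec, ← mulVec_transpose, ← hj]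
  exact hy _ hjx

variable {τ : ℝ}

lemma DimExpander.finrank_chain_growth (hexp : DimExpander A τ) (hτ : 0 ≤ τ) (hid : ∃ i, A i = 1)
    {V : ℕ → Submodule F (Fin n → F)} {m : ℕ} (hV : ∀ s < m, imageSum A (V s) ≤ V (s + 1)) :
    n < 2 * finrank F (V m) ∨ (1 + τ) ^ m * finrank F (V 0) ≤ finrank F (V m) := by
  induction m with
  | zero => simp
  | succ m ih =>
    have hstep := hV m m.lt_succ_self
    have hmono : finrank F (V m) ≤ finrank F (V (m + 1)) :=
      Submodule.finrank_mono ((le_imageSum hid _).trans hstep)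
    rcases ih fun s hs => hV s (by omega) with hbig | hgrow
    · exact .inl (by omega)
    by_cases hsmall : 2 * finrank F (V m) ≤ n
    · right
      calc (1 + τ) ^ (m + 1) * finrank F (V 0) = (1 + τ) * ((1 + τ) ^ m * finrank F (V 0)) := by
            ring
        _ ≤ (1 + τ) * finrank F (V m) := by gcongr
        _ ≤ finrank F (imageSum A (V m)) := hexp _ hsmall
        _ ≤ finrank F (V (m + 1)) := by exact_mod_cast Submodule.finrank_mono hstep
    · exact .inl (by omega)

lemma DimExpander.le_two (hexp : DimExpander A τ) (hn : 2 ≤ n) : τ ≤ 2 := by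
  obtain ⟨b, hb⟩ := exists_linearIndependent_of_le_finrank (R := F) (M := Fin n → F)
    (n := n / 2) (by rw [finrank_fin_fun]; omega)
  have hspan := finrank_span_eq_card hb
  rw [Fintype.card_fin] at hspan
  have hexpand := hexp (Submodule.span F (Set.range b)) (by omega)
  have hle := (⨆ i, (Submodule.span F (Set.range b)).map (A i).mulVecLin).finrank_le
  rw [hspan] at hexpand
  rw [finrank_fin_fun] at hle
  have hhalf : (n : ℝ) ≤ 3 * (n / 2 : ℕ) := by exact_mod_cast (by omega : n ≤ 3 * (n / 2))
  have hpos : (0 : ℝ) < (n / 2 : ℕ) := by exact_mod_cast (by omega : 0 < n / 2)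
  have : (1 + τ) * (n / 2 : ℕ) ≤ (3 : ℝ) * (n / 2 : ℕ) := by
    refine hexpand.trans (le_trans ?_ hhalf)
    exact_mod_cast hle
  nlinarith

lemma monotone_of_imageSum_le (hid : ∃ i, A i = 1) {W : ℕ → Submodule F (Fin n → F)}
    (hW : ∀ s, imageSum A (W s) ≤ W (s + 1)) : Monotone W :=
  monotone_nat_of_le_succ fun s => (le_imageSum hid (W s)).trans (hW s)

lemma le_finrank_of_le_one {ε : ℝ} (hn : n ≤ 1) (hε : 0 < ε) {V : Submodule F (Fin n → F)}
    (hV : ε * n ≤ finrank F V) : n ≤ finrank F V := by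
  rcases Nat.eq_zero_or_pos n with rfl | hpos
  · exact Nat.zero_le _
  · have : (0 : ℝ) < finrank F V := lt_of_lt_of_le (by positivity) hV
    have : 0 < finrank F V := by exact_mod_cast this
    omega

theorem DimExpander.one_sub_mul_le_finrank (hexp : DimExpander A τ) (hτ : 0 ≤ τ)
    (htrans : ∀ i, ∃ j, A j = (A i)ᵀ) (hid : ∃ i, A i = 1)
    {W : ℕ → Submodule F (Fin n → F)} (hW : ∀ s, W (s + 1) = imageSum A (W s))
    {ε : ℝ} {m t : ℕ} (hmt : 2 * m ≤ t) (hpow : 1 ≤ 2 * ε * (1 + τ) ^ m)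
    (hW0 : ε * n ≤ finrank F (W 0)) : (1 - ε) * n ≤ finrank F (W t) := by
  by_contra! hlt
  have hgrowth : (n : ℝ) ≤ 2 * ((1 + τ) ^ m * (ε * n)) := by nlinarith
  have hfwd : n ≤ 2 * finrank F (W m) := by
    rcases hexp.finrank_chain_growth hτ hid (m := m) fun s _ => (hW s).ge with h | h
    · omega
    · have : (n : ℝ) ≤ 2 * finrank F (W m) := by
        calc (n : ℝ) ≤ 2 * ((1 + τ) ^ m * (ε * n)) := hgrowth
          _ ≤ 2 * ((1 + τ) ^ m * finrank F (W 0)) := by gcongr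
          _ ≤ 2 * finrank F (W m) := by gcongr
      exact_mod_cast this
  set V : ℕ → Submodule F (Fin n → F) := fun k => (toBilin' 1).orthogonal (W (t - k))
  have hbwd : n < 2 * finrank F (V m) := by
    have hV : ∀ k < m, imageSum A (V k) ≤ V (k + 1) := fun k hk => by
      have hk' : t - k = t - (k + 1) + 1 := by omega
      simpa only [V, hk', hW] using imageSum_orthogonal_imageSum_le htrans (W (t - (k + 1)))
    have hV0 : ((finrank F (V 0) : ℕ) : ℝ) + finrank F (W t) = n := by
      exact_mod_cast finrank_orthogonal_dotProduct_add (W t)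
    rcases hexp.finrank_chain_growth hτ hid hV with h | h
    · exact h
    · have : (n : ℝ) < 2 * finrank F (V m) := by
        calc (n : ℝ) ≤ 2 * ((1 + τ) ^ m * (ε * n)) := hgrowth
          _ < 2 * ((1 + τ) ^ m * finrank F (V 0)) := by gcongr; linarith
          _ ≤ 2 * finrank F (V m) := by gcongr
      exact_mod_cast this
  have hsum := finrank_orthogonal_dotProduct_add (W (t - m))
  have hmono := Submodule.finrank_mono
    (monotone_of_imageSum_le hid (fun s => (hW s).ge) (show m ≤ t - m by omega))
  simp only [V] at hbwd
  omega

end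

lemma one_le_two_mul_mul_pow_div_two {τ ε : ℝ} {t : ℕ} (hτ : 0 < τ) (hτ2 : τ ≤ 2) (hε : 0 < ε)
    (hε1 : ε < 1) (ht : 3 * Real.logb 2 (1 / ε) / τ < t) : 1 ≤ 2 * ε * (1 + τ) ^ (t / 2) := by
  set m := t / 2
  have hlog2 : 0 < Real.log 2 := Real.log_pos one_lt_two
  have hlogε : Real.log ε < 0 := Real.log_neg hε hε1
  have hbern : (3 : ℝ) ^ (τ / 2) ≤ 1 + τ := by
    have := rpow_one_add_le_one_add_mul_self (s := 2) (by norm_num) (p := τ / 2)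
      (by positivity) (by linarith)
    norm_num at this
    linarith
  have h89 : 3 * Real.log 2 ≤ 2 * Real.log 3 := by
    have := Real.log_le_log (by norm_num) (by norm_num : (2 : ℝ) ^ 3 ≤ 3 ^ 2)
    simpa only [Real.log_pow, Nat.cast_ofNat] using this
  have hlog1τ : 3 / 4 * τ * Real.log 2 ≤ Real.log (1 + τ) := by
    have := Real.log_le_log (by positivity) hbern
    rw [Real.log_rpow (by norm_num)] at this
    nlinarith
  have hm : (t : ℝ) ≤ 2 * m + 1 := by exact_mod_cast (by omega : t ≤ 2 * m + 1)
  have ht' : -3 * Real.log ε < t * τ * Real.log 2 := by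
    rw [div_lt_iff₀ hτ, Real.logb, one_div, Real.log_inv] at ht
    field_simp at ht
    linarith
  rw [← Real.log_nonneg_iff (by positivity), Real.log_mul (by positivity) (by positivity),
    Real.log_mul (by positivity) hε.ne', Real.log_pow]
  nlinarith [mul_le_mul_of_nonneg_left hlog1τ (Nat.cast_nonneg m : (0 : ℝ) ≤ m),
    mul_le_mul_of_nonneg_right hm (by positivity : 0 ≤ τ * Real.log 2),
    mul_le_mul_of_nonneg_right hτ2 hlog2.le]

/-- If `A` is a `τ`-dimension expander closed under transpose and containing the identity,
and `t > 3·log₂(1/ε)/τ`, then the family of all products of `t` matrices from `A` is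
`(εn, (1-ε)n)`-dimension-spreading. -/
theorem words_dimSpreading {F : Type*} [Field F] {D n : ℕ} (τ ε : ℝ)
    (hτ : 0 < τ) (hε : 0 < ε) (hε1 : ε < 1)
    (A : Fin D → Matrix (Fin n) (Fin n) F)
    (hexp : DimExpander A τ)
    (htrans : ∀ i, ∃ j, A j = (A i)ᵀ)
    (hid : ∃ i, A i = 1)
    (t : ℕ) (ht : 3 * Real.logb 2 (1 / ε) / τ < t)
    (U : Submodule F (Fin n → F))
    (hU : ε * n ≤ (Module.finrank F U : ℝ)) :
    (1 - ε) * n ≤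
      (Module.finrank F ↥(⨆ w : Fin t → Fin D, U.map (wordProd A w).mulVecLin) : ℝ) := by
  change (1 - ε) * n ≤ (finrank F (wordSpan A U t) : ℝ)
  have hchain : ∀ s, wordSpan A U (s + 1) = imageSum A (wordSpan A U s) := wordSpan_succ U
  rw [← wordSpan_zero (A := A) U] at hU
  rcases le_or_gt n 1 with hn | hn
  · have hUt := Submodule.finrank_mono
      (monotone_of_imageSum_le hid (fun s => (hchain s).ge) (Nat.zero_le t))
    have : (n : ℝ) ≤ finrank F (wordSpan A U t) := by
      exact_mod_cast (le_finrank_of_le_one hn hε hU).trans hUt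
    nlinarith
  · exact hexp.one_sub_mul_le_finrank hτ.le htrans hid hchain (m := t / 2) (by omega)
      (one_le_two_mul_mul_pow_div_two hτ (hexp.le_two hn) hε hε1 ht) hU
end

section
/- Let f_1, ..., f_D : [n] → [n] ∪ {⊥} be partial functions, each monotone on its domain (whenever i_1 < i_2 and both f(i_1) and f(i_2) are defined, f(i_1) < f(i_2)), and suppose the associated bipartite graph is a τ-vertex expander: for every subset S ⊆ [n] with |S| ≤ n/2, the neighborhood |∪_{i=1}^D f_i(S)| ≥ (1+τ)·|S| (where f_i(S) = {f_i(s) : s ∈ S, f_i(s) defined}). For each i, let A_{f_i} be the n×n matrix over a field F defined by sending the standard basis vector e_j to e_{f_i(j)} if f_i(j) is defined and to 0 otherwise. Then the family {A_{f_1}, ..., A_{f_D}} is a τ-dimension expander over F: for every subspace U ⊆ F^n with dim(U) ≤ n/2, dim(Σ_{i=1}^D A_{f_i}(U)) ≥ (1+τ)·dim(U). -/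
/-!
Order the coordinates of `F^n` and call `k` a leading index of a subspace `W` if some vector
of `W` has its last nonzero coordinate at `k`. A subspace has exactly `dim W` leading indices:
restriction to them is injective on `W`, and vectors witnessing distinct leading indices form a
triangular matrix with nonzero diagonal. A monotone matching `f` sends a vector whose last
nonzero coordinate is `j` to one whose last nonzero coordinate is `f j`, so the neighbourhood
of the leading indices of `U` consists of leading indices of `Σ A_{f_i}(U)`, and vertex expansion
applied to the leading indices of `U` gives dimension expansion.
-/

/-- The 0/1 matrix of a partial function `f : [n] → [n] ∪ {⊥}`, sending `e_j` to `e_{f j}`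
when `f j` is defined and to `0` otherwise. Its `(k, j)` entry is `1` iff `f j = some k`. -/
def matrixOfPartialFun {F : Type*} [Field F] {n : ℕ} (f : Fin n → Option (Fin n)) :
    Matrix (Fin n) (Fin n) F :=
  Matrix.of fun k j => if f j = some k then (1 : F) else 0

open Module Matrix

theorem exists_ne_zero_forall_lt_eq_zero {ι M : Type*} [LinearOrder ι] [Finite ι] [Zero M]
    {w : ι → M} (hw : w ≠ 0) : ∃ k, w k ≠ 0 ∧ ∀ l, k < l → w l = 0 := by
  obtain ⟨k₀, hk₀⟩ := Function.ne_iff.1 hw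
  obtain ⟨k, hk, hmax⟩ := Set.exists_max_image {k | w k ≠ 0} id (Set.toFinite _) ⟨k₀, hk₀⟩
  exact ⟨k, hk, fun l hkl => by_contra fun hl => (hmax l hl).not_gt hkl⟩

namespace Submodule

section Semiring

variable {R ι : Type*} [Semiring R] [LinearOrder ι]

def leadingIndices (W : Submodule R (ι → R)) : Set ι :=
  {k | ∃ w ∈ W, w k ≠ 0 ∧ ∀ l, k < l → w l = 0}

theorem leadingIndices_mono {W V : Submodule R (ι → R)} (h : W ≤ V) :
    W.leadingIndices ⊆ V.leadingIndices :=
  fun _ ⟨w, hw, hwk⟩ => ⟨w, h hw, hwk⟩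

end Semiring

variable {F ι : Type*} [Field F] [LinearOrder ι] [Fintype ι]

theorem finrank_le_ncard_leadingIndices (W : Submodule F (ι → F)) :
    finrank F W ≤ W.leadingIndices.ncard := by
  classical
  let restrict := (LinearMap.funLeft F F ((↑) : W.leadingIndices → ι)).comp W.subtype
  have hinj : Function.Injective restrict := by
    refine (injective_iff_map_eq_zero restrict).2 fun w hw => ?_
    by_contra hne
    obtain ⟨k, hk, hlast⟩ := exists_ne_zero_forall_lt_eq_zero (w := (w : ι → F))
      (by simpa using hne)
    exact hk (congrFun hw ⟨k, w, w.2, hk, hlast⟩)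
  rw [← Nat.card_coe_set_eq, Nat.card_eq_fintype_card, ← finrank_fintype_fun_eq_card F]
  exact LinearMap.finrank_le_finrank_of_injective hinj

theorem ncard_leadingIndices_le_finrank (W : Submodule F (ι → F)) :
    W.leadingIndices.ncard ≤ finrank F W := by
  classical
  choose v hvW hvk hvlast using fun k : W.leadingIndices => k.2
  let M : Matrix W.leadingIndices W.leadingIndices F := fun k l => v k l
  have hdet : M.det ≠ 0 := by
    rw [Matrix.det_of_isLowerTriangular M fun k l hkl => hvlast k l hkl]
    exact Finset.prod_ne_zero_iff.2 fun k _ => hvk k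
  have hli : LinearIndependent F fun k => (⟨v k, hvW k⟩ : W) :=
    .of_comp ((LinearMap.funLeft F F ((↑) : W.leadingIndices → ι)).comp W.subtype)
      (linearIndependent_rows_of_det_ne_zero hdet)
  rw [← Nat.card_coe_set_eq, Nat.card_eq_fintype_card]
  exact hli.fintype_card_le_finrank

theorem ncard_leadingIndices (W : Submodule F (ι → F)) :
    W.leadingIndices.ncard = finrank F W :=
  (ncard_leadingIndices_le_finrank W).antisymm (finrank_le_ncard_leadingIndices W)

end Submodule

section MonotoneMatching

variable {F : Type*} [Field F] {n : ℕ} {f : Fin n → Option (Fin n)}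

theorem matrixOfPartialFun_mulVec_apply (w : Fin n → F) (k : Fin n) :
    (matrixOfPartialFun f *ᵥ w) k = ∑ j with f j = some k, w j := by
  simp [Matrix.mulVec, dotProduct, matrixOfPartialFun, Finset.sum_filter]

theorem mem_leadingIndices_map_matrixOfPartialFun
    (hmono : ∀ j₁ j₂ k₁ k₂ : Fin n, j₁ < j₂ → f j₁ = some k₁ → f j₂ = some k₂ → k₁ < k₂)
    {U : Submodule F (Fin n → F)} {j k : Fin n} (hj : j ∈ U.leadingIndices)
    (hfj : f j = some k) :
    k ∈ (U.map (matrixOfPartialFun f).mulVecLin).leadingIndices := by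
  obtain ⟨w, hwU, hwj, hwlast⟩ := hj
  refine ⟨matrixOfPartialFun f *ᵥ w, Submodule.mem_map_of_mem hwU, ?_, fun l hkl => ?_⟩
  · rwa [matrixOfPartialFun_mulVec_apply, Finset.sum_eq_single_of_mem j (by simpa using hfj)]
    intro b hb hbj
    have hfb : f b = some k := (Finset.mem_filter.1 hb).2
    rcases hbj.lt_or_gt with hbj | hbj
    · exact absurd (hmono b j k k hbj hfb hfj) (lt_irrefl k)
    · exact absurd (hmono j b k k hbj hfj hfb) (lt_irrefl k)
  · rw [matrixOfPartialFun_mulVec_apply]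
    refine Finset.sum_eq_zero fun b hb => hwlast b (lt_of_not_ge fun hbj => ?_)
    have hfb : f b = some l := (Finset.mem_filter.1 hb).2
    rcases hbj.lt_or_eq with hbj | rfl
    · exact lt_asymm hkl (hmono b j l k hbj hfb hfj)
    · exact hkl.ne (Option.some.inj (hfj.symm.trans hfb))

end MonotoneMatching

/-- If the partial functions `f₁, …, f_D` are monotone matchings whose associated bipartite
graph is a `τ`-vertex expander, then the matrices `A_{f₁}, …, A_{f_D}` form a
`τ`-dimension expander over any field. -/
theorem monotone_expander_gives_dimension_expander {F : Type*} [Field F] {D n : ℕ} (τ : ℝ)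
    (f : Fin D → Fin n → Option (Fin n))
    (hmono : ∀ i (j₁ j₂ k₁ k₂ : Fin n), j₁ < j₂ →
      f i j₁ = some k₁ → f i j₂ = some k₂ → k₁ < k₂)
    (hexp : ∀ S : Finset (Fin n), 2 * S.card ≤ n →
      (1 + τ) * (S.card : ℝ) ≤
        (Set.ncard {k : Fin n | ∃ i, ∃ s ∈ S, f i s = some k} : ℝ))
    (U : Submodule F (Fin n → F)) (hU : 2 * Module.finrank F U ≤ n) :
    (1 + τ) * (Module.finrank F U : ℝ) ≤
      (Module.finrank F
        ↥(⨆ i, U.map (matrixOfPartialFun (F := F) (f i)).mulVecLin) : ℝ) := by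
  set V := ⨆ i, U.map (matrixOfPartialFun (F := F) (f i)).mulVecLin
  set S := (Set.toFinite U.leadingIndices).toFinset
  have hS : S.card = finrank F U := by
    rw [← Set.ncard_eq_toFinset_card, Submodule.ncard_leadingIndices]
  have hneighbours : {k | ∃ i, ∃ s ∈ S, f i s = some k} ⊆ V.leadingIndices :=
    fun k ⟨i, s, hs, hfs⟩ => Submodule.leadingIndices_mono (le_iSup _ i)
      (mem_leadingIndices_map_matrixOfPartialFun (hmono i) (by simpa [S] using hs) hfs)
  calc (1 + τ) * (finrank F U : ℝ) = (1 + τ) * (S.card : ℝ) := by rw [hS]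
    _ ≤ (Set.ncard {k | ∃ i, ∃ s ∈ S, f i s = some k} : ℝ) := hexp S (hS ▸ hU)
    _ ≤ (V.leadingIndices.ncard : ℝ) := by exact_mod_cast Set.ncard_le_ncard hneighbours
    _ = (finrank F V : ℝ) := by rw [Submodule.ncard_leadingIndices]
end
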